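/- (Polynomial Affection Principle.) Let Γ = (Ĝ, S) be a finite connected loose graph, let xy be an edge of Ĝ with both endpoints x, y ∈ S, let Γ_{xy} = (Ĝ', S) be the resolution of Γ along xy, and let k be any finite field. Then the numbers of k-rational points satisfy |X_Γ(k)| − |X_{Γ_{xy}}(k)| = |X_Γ(k) ∩ P_{x,y}(k)| − |X_{Γ_{xy}}(k) ∩ P'_{x,y}(k)|. (This is the point-count version of the identity [Γ]_k − [Γ_{xy}]_k = [Γ|_{P_{x,y}}]_k − [Γ_{xy}|_{P_{x,y}}]_k in the Grothendieck ring of k-schemes.) -/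

import Mathlib

/-- The local affine chart `A_v^H(k)` of the vertex `v` of the graph `H`. -/
def looseChart {V : Type} (H : SimpleGraph V) (k : Type) [Field k] (v : V) :
    Set (Projectivization k (V → k)) :=
  {p | (∀ w, w ∉ insert v (H.neighborSet v) → p.rep w = 0) ∧ p.rep v ≠ 0}

/-- The closed ball of radius 1 around `u` in the graph `H`. -/
def closedBall {V : Type} (H : SimpleGraph V) (u : V) : Set V :=
  insert u (H.neighborSet u)

/-- The projective subspace `P_{x,y}(k)` generated by the closed balls of
radius 1 around `x` and `y`. -/
def ballSpace {V : Type} (H : SimpleGraph V) (k : Type) [Field k] (x y : V) :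
    Set (Projectivization k (V → k)) :=
  {p | ∀ w, w ∉ closedBall H x ∪ closedBall H y → p.rep w = 0}

/-- The completion `Ĝ'` of the resolution of the loose graph `(Ĝ, S)` along the
edge `xy`: the edge `xy` is deleted and two new pendant vertices `x̃ = inr false`
and `ỹ = inr true` are attached to `x` and `y` respectively. -/
def resGraph {V : Type} (G : SimpleGraph V) (x y : V) : SimpleGraph (V ⊕ Bool) where
  Adj a b :=
    match a, b with
    | Sum.inl a, Sum.inl b => G.Adj a b ∧ ¬((a = x ∧ b = y) ∨ (a = y ∧ b = x))
    | Sum.inl a, Sum.inr c => (c = false ∧ a = x) ∨ (c = true ∧ a = y)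
    | Sum.inr c, Sum.inl a => (c = false ∧ a = x) ∨ (c = true ∧ a = y)
    | Sum.inr _, Sum.inr _ => False
  symm := by
    constructor
    rintro (a | c) (b | d) h
    · exact ⟨h.1.symm, fun hc => h.2 (by tauto)⟩
    · exact h
    · exact h
    · exact h
  loopless := by
    constructor
    rintro (a | c) h
    · exact G.loopless.irrefl a h.1
    · exact h

/-!
Extension by zero along `V ↪ V ⊕ Bool` embeds `ℙ(k^V)` into `ℙ(k^{V ⊕ Bool})`. A point of `X_Γ(k)`
outside `P_{x,y}(k)` lies in a chart `A_v` with `v ≠ x, y`, and for such `v` the closed balls of `v`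
in `Ĝ` and `Ĝ'` agree, so the embedding maps `X_Γ(k) \ P_{x,y}(k)` bijectively onto
`X_{Γ_{xy}}(k) \ P'_{x,y}(k)`. Splitting both point counts along `P` and `P'` gives the identity.
-/

open Set

lemma ncard_sub_ncard_eq_of_image_diff {α β : Type*} {f : α → β} {X P : Set α} {X' P' : Set β}
    (hX : X.Finite) (hX' : X'.Finite) (hf : InjOn f (X \ P)) (h : f '' (X \ P) = X' \ P') :
    (X.ncard : ℤ) - X'.ncard = (X ∩ P).ncard - (X' ∩ P').ncard := by
  have hdiff : (X \ P).ncard = (X' \ P').ncard := by rw [← h, hf.ncard_image]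
  have hsplit := ncard_inter_add_ncard_sdiff_eq_ncard X P hX
  have hsplit' := ncard_inter_add_ncard_sdiff_eq_ncard X' P' hX'
  omega

namespace Projectivization

variable {k ι : Type*} [Field k]

lemma mk_rep_apply_eq_zero_iff {v : ι → k} (hv : v ≠ 0) (i : ι) :
    (mk k v hv).rep i = 0 ↔ v i = 0 := by
  obtain ⟨a, ha⟩ := exists_smul_eq_mk_rep k v hv
  rw [← ha, Pi.smul_apply, Units.smul_def, smul_eq_mul, mul_eq_zero, or_iff_right a.ne_zero]

end Projectivization

section ExtendByZero

variable (k V W : Type*) [Field k]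

def extendByZero : (V → k) →ₗ[k] (V ⊕ W → k) where
  toFun f := Sum.elim f 0
  map_add' _ _ := by ext (w | w) <;> simp
  map_smul' _ _ := by ext (w | w) <;> simp

lemma extendByZero_injective : Function.Injective (extendByZero k V W) :=
  fun _ _ h => funext fun v => congrFun h (Sum.inl v)

noncomputable def projExtendByZero :
    Projectivization k (V → k) → Projectivization k (V ⊕ W → k) :=
  Projectivization.map (extendByZero k V W) (extendByZero_injective k V W)

lemma projExtendByZero_injective : Function.Injective (projExtendByZero k V W) :=
  Projectivization.map_injective _ _

variable {k V W}

lemma projExtendByZero_mk {f : V → k} (hf : f ≠ 0) :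
    projExtendByZero k V W (Projectivization.mk k f hf) =
      Projectivization.mk k (extendByZero k V W f)
        ((map_ne_zero_iff _ (extendByZero_injective k V W)).2 hf) :=
  Projectivization.map_mk _ _ _ _

lemma projExtendByZero_rep_inl_eq_zero_iff (p : Projectivization k (V → k)) (v : V) :
    (projExtendByZero k V W p).rep (Sum.inl v) = 0 ↔ p.rep v = 0 := by
  conv_lhs => rw [← p.mk_rep, projExtendByZero_mk, Projectivization.mk_rep_apply_eq_zero_iff]
  rfl

lemma projExtendByZero_rep_inr (p : Projectivization k (V → k)) (w : W) :
    (projExtendByZero k V W p).rep (Sum.inr w) = 0 := by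
  rw [← p.mk_rep, projExtendByZero_mk, Projectivization.mk_rep_apply_eq_zero_iff]
  rfl

lemma exists_projExtendByZero_eq {q : Projectivization k (V ⊕ W → k)}
    (hq : ∀ w, q.rep (Sum.inr w) = 0) : ∃ p, projExtendByZero k V W p = q := by
  have hext : extendByZero k V W (q.rep ∘ Sum.inl) = q.rep := by
    ext (v | w)
    · rfl
    · exact (hq w).symm
  have hne : q.rep ∘ Sum.inl ≠ 0 := fun h => q.rep_nonzero (by rw [← hext, h, map_zero])
  refine ⟨Projectivization.mk k _ hne, ?_⟩
  rw [projExtendByZero_mk]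
  conv_rhs => rw [← q.mk_rep]
  simp only [hext]

end ExtendByZero

section Resolution

variable {V : Type} {k : Type} [Field k]

lemma mem_looseChart_iff {H : SimpleGraph V} {v : V} {p : Projectivization k (V → k)} :
    p ∈ looseChart H k v ↔ (∀ w, w ∉ closedBall H v → p.rep w = 0) ∧ p.rep v ≠ 0 :=
  Iff.rfl

lemma looseChart_subset_ballSpace_left (H : SimpleGraph V) (x y : V) :
    looseChart H k x ⊆ ballSpace H k x y :=
  fun _ hp w hw => hp.1 w fun hx => hw (Or.inl hx)

lemma looseChart_subset_ballSpace_right (H : SimpleGraph V) (x y : V) :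
    looseChart H k y ⊆ ballSpace H k x y :=
  fun _ hp w hw => hp.1 w fun hy => hw (Or.inr hy)

variable (G : SimpleGraph V) {x y : V}

lemma resGraph_adj_inl_inl (a b : V) :
    (resGraph G x y).Adj (Sum.inl a) (Sum.inl b) ↔
      G.Adj a b ∧ ¬((a = x ∧ b = y) ∨ (a = y ∧ b = x)) :=
  Iff.rfl

lemma resGraph_adj_inl_inr (a : V) (b : Bool) :
    (resGraph G x y).Adj (Sum.inl a) (Sum.inr b) ↔ (b = false ∧ a = x) ∨ (b = true ∧ a = y) :=
  Iff.rfl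

lemma inl_mem_closedBall_resGraph_iff {v : V} (hvx : v ≠ x) (hvy : v ≠ y) (w : V) :
    Sum.inl w ∈ closedBall (resGraph G x y) (Sum.inl v) ↔ w ∈ closedBall G v := by
  simp only [closedBall, mem_insert_iff, SimpleGraph.mem_neighborSet, Sum.inl.injEq,
    resGraph_adj_inl_inl]
  tauto

lemma inr_notMem_closedBall_resGraph {v : V} (hvx : v ≠ x) (hvy : v ≠ y) (b : Bool) :
    Sum.inr b ∉ closedBall (resGraph G x y) (Sum.inl v) := by
  simp only [closedBall, mem_insert_iff, SimpleGraph.mem_neighborSet, reduceCtorEq, false_or,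
    resGraph_adj_inl_inr]
  tauto

-- Deleting `xy` drops `y` from the ball of `x` and vice versa, but both remain centres.
lemma inl_mem_closedBall_union_resGraph_iff (w : V) :
    Sum.inl w ∈ closedBall (resGraph G x y) (Sum.inl x) ∪
        closedBall (resGraph G x y) (Sum.inl y) ↔
      w ∈ closedBall G x ∪ closedBall G y := by
  simp only [closedBall, mem_union, mem_insert_iff, SimpleGraph.mem_neighborSet, Sum.inl.injEq,
    resGraph_adj_inl_inl]
  by_cases hwx : w = x <;> by_cases hwy : w = y <;> tauto

lemma projExtendByZero_mem_looseChart_resGraph_iff {v : V} (hvx : v ≠ x) (hvy : v ≠ y)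
    (p : Projectivization k (V → k)) :
    projExtendByZero k V Bool p ∈ looseChart (resGraph G x y) k (Sum.inl v) ↔
      p ∈ looseChart G k v := by
  simp only [mem_looseChart_iff, Sum.forall, inl_mem_closedBall_resGraph_iff G hvx hvy,
    ne_eq, projExtendByZero_rep_inl_eq_zero_iff, projExtendByZero_rep_inr, implies_true, and_true]

lemma looseChart_resGraph_subset_range {v : V} (hvx : v ≠ x) (hvy : v ≠ y) :
    looseChart (resGraph G x y) k (Sum.inl v) ⊆ range (projExtendByZero k V Bool) :=
  fun _ hq => exists_projExtendByZero_eq fun b =>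
    hq.1 _ (inr_notMem_closedBall_resGraph G hvx hvy b)

lemma projExtendByZero_mem_ballSpace_resGraph_iff (p : Projectivization k (V → k)) :
    projExtendByZero k V Bool p ∈ ballSpace (resGraph G x y) k (Sum.inl x) (Sum.inl y) ↔
      p ∈ ballSpace G k x y := by
  simp only [ballSpace, mem_ofPred_eq, Sum.forall, inl_mem_closedBall_union_resGraph_iff,
    projExtendByZero_rep_inl_eq_zero_iff, projExtendByZero_rep_inr, implies_true, and_true]

lemma image_projExtendByZero_looseCharts_diff_ballSpace (S : Set V) :
    projExtendByZero k V Bool '' ((⋃ v ∈ S, looseChart G k v) \ ballSpace G k x y) =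
      (⋃ v ∈ S, looseChart (resGraph G x y) k (Sum.inl v)) \
        ballSpace (resGraph G x y) k (Sum.inl x) (Sum.inl y) := by
  ext q
  simp only [mem_image, mem_sdiff, mem_iUnion₂, exists_prop]
  constructor
  · rintro ⟨p, ⟨⟨v, hv, hpv⟩, hpP⟩, rfl⟩
    have hvx : v ≠ x := by rintro rfl; exact hpP (looseChart_subset_ballSpace_left G v y hpv)
    have hvy : v ≠ y := by rintro rfl; exact hpP (looseChart_subset_ballSpace_right G x v hpv)
    exact ⟨⟨v, hv, (projExtendByZero_mem_looseChart_resGraph_iff G hvx hvy p).2 hpv⟩,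
      (projExtendByZero_mem_ballSpace_resGraph_iff G p).not.2 hpP⟩
  · rintro ⟨⟨v, hv, hqv⟩, hqP⟩
    have hvx : v ≠ x := by
      rintro rfl; exact hqP (looseChart_subset_ballSpace_left _ _ (Sum.inl y) hqv)
    have hvy : v ≠ y := by
      rintro rfl; exact hqP (looseChart_subset_ballSpace_right _ (Sum.inl x) _ hqv)
    obtain ⟨p, rfl⟩ := looseChart_resGraph_subset_range G hvx hvy hqv
    exact ⟨p, ⟨⟨v, hv, (projExtendByZero_mem_looseChart_resGraph_iff G hvx hvy p).1 hqv⟩,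
      (projExtendByZero_mem_ballSpace_resGraph_iff G p).not.1 hqP⟩, rfl⟩

end Resolution

theorem polynomial_affection_principle_general {V : Type} [Fintype V]
    (G : SimpleGraph V) (S : Finset V)
    (x y : V)
    (k : Type) [Field k] [Fintype k] :
    ((⋃ v ∈ S, looseChart G k v).ncard : ℤ)
        - ((⋃ v ∈ S, looseChart (resGraph G x y) k (Sum.inl v)).ncard : ℤ)
      = (((⋃ v ∈ S, looseChart G k v) ∩ ballSpace G k x y).ncard : ℤ)
        - (((⋃ v ∈ S, looseChart (resGraph G x y) k (Sum.inl v)) ∩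
            ballSpace (resGraph G x y) k (Sum.inl x) (Sum.inl y)).ncard : ℤ) := by
  exact ncard_sub_ncard_eq_of_image_diff (toFinite _) (toFinite _)
    (projExtendByZero_injective k V Bool).injOn
    (image_projExtendByZero_looseCharts_diff_ballSpace G S)

/-- **Polynomial Affection Principle** (point-count version). For a finite
connected loose graph `Γ = (Ĝ, S)`, an edge `xy` of `Ĝ` with `x, y ∈ S`, the
resolution `Γ_{xy} = (Ĝ', S)` of `Γ` along `xy`, and any finite field `k`:
`|X_Γ(k)| − |X_{Γ_{xy}}(k)| = |X_Γ(k) ∩ P_{x,y}(k)| − |X_{Γ_{xy}}(k) ∩ P'_{x,y}(k)|`. -/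
theorem polynomial_affection_principle {V : Type} [Fintype V]
    (G : SimpleGraph V) [DecidableRel G.Adj] (S : Finset V)
    (hconn : G.Connected)
    (hS1 : ∀ v ∉ S, G.degree v = 1)
    (hS2 : ∀ a b, G.Adj a b → a ∈ S ∨ b ∈ S)
    (x y : V) (hxy : G.Adj x y) (hx : x ∈ S) (hy : y ∈ S)
    (k : Type) [Field k] [Fintype k] :
    ((⋃ v ∈ S, looseChart G k v).ncard : ℤ)
        - ((⋃ v ∈ S, looseChart (resGraph G x y) k (Sum.inl v)).ncard : ℤ)
      = (((⋃ v ∈ S, looseChart G k v) ∩ ballSpace G k x y).ncard : ℤ)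
        - (((⋃ v ∈ S, looseChart (resGraph G x y) k (Sum.inl v)) ∩
            ballSpace (resGraph G x y) k (Sum.inl x) (Sum.inl y)).ncard : ℤ) :=
  polynomial_affection_principle_general G S x y k
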